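/- (Kraft–Chaitin) Let f : ℕ → ℕ be a total recursive function with ∑_{n=0}^∞ 2^{−f(n)} ≤ 1. Then there exists a total recursive injection g : ℕ → {0,1}* such that the range of g is prefix-free and |g(n)| = f(n) for all n. -/

import Mathlib

/-- A set of binary strings is prefix-free if no member is a proper prefix of another. -/
def PrefixFreeSet (S : Set (List Bool)) : Prop :=
  ∀ p ∈ S, ∀ q ∈ S, p <+: q → p = q

/-!
Chaitin's allocation. Keep a list of free strings that are pairwise incomparable with each other
and with the code words issued so far, have pairwise distinct lengths, and have Kraft sum
`1 - ∑_{k<n} 2^{-f k}`. To serve the request `ℓ = f n`, take a longest free string `x` with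
`|x| ≤ ℓ`; it exists because the free strings longer than `ℓ` have distinct lengths and hence
Kraft sum below `2^{-ℓ}`. Issue `x 0^{ℓ-|x|}` and replace `x` by the strings `x 0^i 1` for
`i < ℓ - |x|`. These have lengths `|x| + 1, …, ℓ`, none of which was free by the choice of `x`,
and the Kraft sum drops by exactly `2^{-ℓ}`. Every step is a finite list computation, so the
code is computable.
-/

section Incomparable

variable {α : Type*}

theorem incompRel_isPrefix_cons_cons {a b : α} (h : a ≠ b) (u v : List α) :
    IncompRel List.IsPrefix (a :: u) (b :: v) :=
  ⟨fun hp => h (List.cons_prefix_cons.1 hp).1, fun hp => h (List.cons_prefix_cons.1 hp).1.symm⟩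

theorem incompRel_isPrefix_append_left_iff (l : List α) {u v : List α} :
    IncompRel List.IsPrefix (l ++ u) (l ++ v) ↔ IncompRel List.IsPrefix u v := by
  simp only [IncompRel, List.prefix_append_right_inj]

theorem IncompRel.of_isPrefix_left {x y z : List α} (h : IncompRel List.IsPrefix x y)
    (hxz : x <+: z) : IncompRel List.IsPrefix z y :=
  ⟨fun hzy => h.1 (hxz.trans hzy),
    fun hyz => (List.prefix_or_prefix_of_prefix hxz hyz).elim h.1 h.2⟩

theorem List.Pairwise.append_of_isPrefix {x : List α} {l xs : List (List α)}
    (hl : (x :: l).Pairwise (IncompRel List.IsPrefix))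
    (hxs : xs.Pairwise (IncompRel List.IsPrefix)) (hx : ∀ z ∈ xs, x <+: z) :
    (xs ++ l).Pairwise (IncompRel List.IsPrefix) := by
  rw [List.pairwise_cons] at hl
  exact List.pairwise_append.2
    ⟨hxs, hl.2, fun z hz y hy => IncompRel.of_isPrefix_left (hl.1 y hy) (hx z hz)⟩

end Incomparable

theorem List.Nodup.perm_cons_filter_ne {α : Type*} [DecidableEq α] {L : List α} (hL : L.Nodup)
    {x : α} (hx : x ∈ L) : L.Perm (x :: L.filter (· ≠ x)) := by
  induction L with
  | nil => cases hx
  | cons y t ih =>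
    obtain ⟨hyt, ht⟩ := List.nodup_cons.1 hL
    rcases List.mem_cons.1 hx with rfl | hxt
    · rw [List.filter_cons_of_neg (by simp), List.filter_eq_self.2 fun z hz => by
        simpa using fun h : z = x => hyt (h ▸ hz)]
    · have hxy : y ≠ x := fun h => hyt (h ▸ hxt)
      rw [List.filter_cons_of_pos (by simpa using hxy)]
      exact ((ih ht hxt).cons y).trans (List.Perm.swap x y _)

namespace KraftChaitin

section KraftSum

variable {α : Type*}

noncomputable def kraftSum (L : List (List α)) : ℝ := (L.map fun y => (2⁻¹ : ℝ) ^ y.length).sum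

theorem kraftSum_eq_sum_map_length (L : List (List α)) :
    kraftSum L = ((L.map List.length).map ((2⁻¹ : ℝ) ^ ·)).sum := by
  rw [kraftSum, List.map_map]
  rfl

theorem kraftSum_cons (x : List α) (L : List (List α)) :
    kraftSum (x :: L) = 2⁻¹ ^ x.length + kraftSum L := by
  simp only [kraftSum, List.map_cons, List.sum_cons]

theorem kraftSum_append (L M : List (List α)) : kraftSum (L ++ M) = kraftSum L + kraftSum M := by
  simp only [kraftSum, List.map_append, List.sum_append]

theorem kraftSum_eq_of_perm {L M : List (List α)} (h : L.Perm M) : kraftSum L = kraftSum M :=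
  (h.map _).sum_eq

theorem sum_range_inv_two_pow (m d : ℕ) :
    ∑ i ∈ Finset.range d, (2⁻¹ : ℝ) ^ (m + i + 1) = 2⁻¹ ^ m - 2⁻¹ ^ (m + d) := by
  induction d with
  | zero => simp
  | succ d ih => rw [Finset.sum_range_succ, ih, ← add_assoc, pow_succ]; ring

theorem sum_inv_two_pow_lt {s : Finset ℕ} {ℓ : ℕ} (hs : ∀ j ∈ s, ℓ < j) :
    ∑ j ∈ s, (2⁻¹ : ℝ) ^ j < 2⁻¹ ^ ℓ := by
  have hsub : s ⊆ Finset.Ico (ℓ + 1) (ℓ + 1 + s.sup id) := fun j hj =>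
    Finset.mem_Ico.2 ⟨hs j hj, by have : j ≤ s.sup id := Finset.le_sup (f := id) hj; omega⟩
  calc ∑ j ∈ s, (2⁻¹ : ℝ) ^ j
      ≤ ∑ j ∈ Finset.Ico (ℓ + 1) (ℓ + 1 + s.sup id), (2⁻¹ : ℝ) ^ j :=
        Finset.sum_le_sum_of_subset_of_nonneg hsub fun _ _ _ => by positivity
    _ = 2⁻¹ ^ ℓ - 2⁻¹ ^ (ℓ + s.sup id) := by
        rw [Finset.sum_Ico_eq_sum_range, add_tsub_cancel_left, ← sum_range_inv_two_pow]
        exact Finset.sum_congr rfl fun i _ => by ring_nf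
    _ < 2⁻¹ ^ ℓ := sub_lt_self _ (by positivity)

theorem exists_length_le_of_pow_le_kraftSum {L : List (List α)} {ℓ : ℕ}
    (hL : (L.map List.length).Nodup) (h : 2⁻¹ ^ ℓ ≤ kraftSum L) : ∃ y ∈ L, y.length ≤ ℓ := by
  by_contra! hlong
  rw [kraftSum_eq_sum_map_length, ← List.sum_toFinset _ hL] at h
  refine h.not_gt (sum_inv_two_pow_lt fun j hj => ?_)
  obtain ⟨y, hy, rfl⟩ := List.mem_map.1 (List.mem_toFinset.1 hj)
  exact hlong y hy

end KraftSum

section LongestUpTo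

variable {α : Type*}

def longestUpTo (ℓ : ℕ) (L : List (List α)) : List α :=
  L.foldr (fun y x => if y.length ≤ ℓ ∧ x.length < y.length then y else x) []

theorem longestUpTo_cons (ℓ : ℕ) (y : List α) (L : List (List α)) :
    longestUpTo ℓ (y :: L) =
      if y.length ≤ ℓ ∧ (longestUpTo ℓ L).length < y.length then y else longestUpTo ℓ L :=
  rfl

theorem length_longestUpTo_le (ℓ : ℕ) (L : List (List α)) : (longestUpTo ℓ L).length ≤ ℓ := by
  induction L with
  | nil => exact Nat.zero_le ℓ
  | cons y L ih => rw [longestUpTo_cons]; split_ifs with h <;> [exact h.1; exact ih]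

theorem length_le_length_longestUpTo {ℓ : ℕ} {L : List (List α)} {y : List α} (hy : y ∈ L)
    (hyℓ : y.length ≤ ℓ) : y.length ≤ (longestUpTo ℓ L).length := by
  induction L with
  | nil => cases hy
  | cons z L ih =>
    rw [longestUpTo_cons]
    rcases List.mem_cons.1 hy with rfl | hyL
    · split_ifs <;> omega
    · have := ih hyL
      split_ifs <;> omega

theorem longestUpTo_mem_or_eq_nil (ℓ : ℕ) (L : List (List α)) :
    longestUpTo ℓ L ∈ L ∨ longestUpTo ℓ L = [] := by
  induction L with
  | nil => exact Or.inr rfl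
  | cons y L ih =>
    rw [longestUpTo_cons]
    split_ifs
    · exact Or.inl List.mem_cons_self
    · exact ih.imp_left (List.mem_cons_of_mem y)

theorem longestUpTo_mem {ℓ : ℕ} {L : List (List α)} {y : List α} (hy : y ∈ L)
    (hyℓ : y.length ≤ ℓ) : longestUpTo ℓ L ∈ L := by
  rcases longestUpTo_mem_or_eq_nil ℓ L with h | h
  · exact h
  · have := length_le_length_longestUpTo hy hyℓ
    rw [h, List.length_nil, Nat.le_zero, List.length_eq_zero_iff] at this
    exact h ▸ this ▸ hy

end LongestUpTo

section Splitting

def pad (ℓ : ℕ) (x : List Bool) : List Bool := x ++ List.replicate (ℓ - x.length) false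

def splitOff (ℓ : ℕ) (x : List Bool) : List (List Bool) :=
  (List.range (ℓ - x.length)).map fun i => x ++ (List.replicate i false ++ [true])

theorem length_pad {ℓ : ℕ} {x : List Bool} (h : x.length ≤ ℓ) : (pad ℓ x).length = ℓ := by
  simp only [pad, List.length_append, List.length_replicate]
  omega

theorem map_length_splitOff (ℓ : ℕ) (x : List Bool) :
    (splitOff ℓ x).map List.length = (List.range (ℓ - x.length)).map (x.length + · + 1) := by
  simp only [splitOff, List.map_map]
  exact List.map_congr_left fun i _ => by simp [add_assoc]

theorem kraftSum_splitOff {ℓ : ℕ} {x : List Bool} (h : x.length ≤ ℓ) :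
    kraftSum (splitOff ℓ x) = 2⁻¹ ^ x.length - 2⁻¹ ^ ℓ := by
  rw [kraftSum_eq_sum_map_length, map_length_splitOff, List.map_map,
    ← List.sum_toFinset _ List.nodup_range, List.toFinset_range]
  simpa [Nat.add_sub_cancel' h] using sum_range_inv_two_pow x.length (ℓ - x.length)

theorem replicate_eq_append_cons {α : Type*} (a : α) {i j : ℕ} (h : i < j) :
    List.replicate j a = List.replicate i a ++ a :: List.replicate (j - i - 1) a := by
  rw [← List.replicate_succ, ← List.replicate_add]
  congr 1
  omega

theorem incompRel_replicate_append_true {i j : ℕ} (h : i < j) (u : List Bool) :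
    IncompRel List.IsPrefix (List.replicate i false ++ [true]) (List.replicate j false ++ u) := by
  rw [replicate_eq_append_cons false h, List.append_assoc, incompRel_isPrefix_append_left_iff]
  exact incompRel_isPrefix_cons_cons (by decide) _ _

theorem pairwise_replicate_cons_map_range (d : ℕ) :
    (List.replicate d false ::
      (List.range d).map fun i => List.replicate i false ++ [true]).Pairwise
        (IncompRel List.IsPrefix) := by
  refine List.pairwise_cons.2 ⟨?_, List.pairwise_map.2
    (List.pairwise_lt_range.imp fun hij => incompRel_replicate_append_true hij _)⟩
  simp only [List.mem_map, List.mem_range]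
  rintro _ ⟨i, hi, rfl⟩
  simpa using (incompRel_replicate_append_true hi []).symm

theorem pairwise_pad_cons_splitOff (ℓ : ℕ) (x : List Bool) :
    (pad ℓ x :: splitOff ℓ x).Pairwise (IncompRel List.IsPrefix) := by
  simpa [pad, splitOff, List.map_map, Function.comp_def] using List.pairwise_map.2
    ((pairwise_replicate_cons_map_range _).imp (incompRel_isPrefix_append_left_iff x).2)

theorem isPrefix_of_mem_pad_cons_splitOff {ℓ : ℕ} {x z : List Bool}
    (hz : z ∈ pad ℓ x :: splitOff ℓ x) : x <+: z := by
  simp only [List.mem_cons, splitOff, List.mem_map] at hz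
  obtain rfl | ⟨i, -, rfl⟩ := hz
  exacts [List.prefix_append _ _, List.prefix_append _ _]

end Splitting

section Allocation

def step (ℓ : ℕ) (L : List (List Bool)) : List (List Bool) :=
  L.filter (· ≠ longestUpTo ℓ L) ++ splitOff ℓ (longestUpTo ℓ L)

variable {ℓ : ℕ} {L : List (List Bool)}

theorem longestUpTo_mem_of_pow_le_kraftSum (hL : (L.map List.length).Nodup)
    (h : 2⁻¹ ^ ℓ ≤ kraftSum L) : longestUpTo ℓ L ∈ L :=
  let ⟨_, hy, hyℓ⟩ := exists_length_le_of_pow_le_kraftSum hL h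
  longestUpTo_mem hy hyℓ

theorem nodup_map_length_step (hL : (L.map List.length).Nodup) :
    ((step ℓ L).map List.length).Nodup := by
  rw [step, List.map_append, map_length_splitOff]
  refine (hL.sublist (List.filter_sublist.map _)).append
    (List.nodup_range.map fun i j h => by simpa using h) fun n hn hn' => ?_
  obtain ⟨y, hy, rfl⟩ := List.mem_map.1 hn
  obtain ⟨i, hi, hyi⟩ := List.mem_map.1 hn'
  rw [List.mem_range] at hi
  have := length_le_length_longestUpTo (List.mem_filter.1 hy).1 (ℓ := ℓ) (by omega)
  omega

theorem kraftSum_step (hL : L.Nodup) (hx : longestUpTo ℓ L ∈ L) :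
    kraftSum (step ℓ L) = kraftSum L - 2⁻¹ ^ ℓ := by
  have hperm := kraftSum_eq_of_perm (hL.perm_cons_filter_ne hx)
  rw [kraftSum_cons] at hperm
  rw [step, kraftSum_append, kraftSum_splitOff (length_longestUpTo_le ℓ L)]
  linarith

theorem pairwise_step {A : List (List Bool)} (h : (A ++ L).Pairwise (IncompRel List.IsPrefix))
    (hx : longestUpTo ℓ L ∈ L) :
    (A ++ [pad ℓ (longestUpTo ℓ L)] ++ step ℓ L).Pairwise (IncompRel List.IsPrefix) := by
  set x := longestUpTo ℓ L
  have hsymm {u v : List Bool} : IncompRel List.IsPrefix u v → IncompRel List.IsPrefix v u :=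
    IncompRel.symm
  have hL : L.Nodup := (h.sublist (List.sublist_append_right A L)).imp IncompRel.ne
  have hperm : (A ++ L).Perm (x :: (A ++ L.filter (· ≠ x))) :=
    ((hL.perm_cons_filter_ne hx).append_left A).trans List.perm_middle
  refine ((hperm.pairwise h hsymm).append_of_isPrefix (pairwise_pad_cons_splitOff ℓ x)
    fun z hz => isPrefix_of_mem_pad_cons_splitOff hz).perm ?_ hsymm
  rw [step, List.append_assoc, List.singleton_append, List.cons_append]
  exact (List.perm_append_comm.trans (by rw [List.append_assoc])).cons _ |>.trans
    List.perm_middle.symm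

end Allocation

section Code

def freeNodes (f : ℕ → ℕ) : ℕ → List (List Bool)
  | 0 => [[]]
  | n + 1 => step (f n) (freeNodes f n)

def code (f : ℕ → ℕ) (n : ℕ) : List Bool := pad (f n) (longestUpTo (f n) (freeNodes f n))

variable {f : ℕ → ℕ}

theorem length_code (n : ℕ) : (code f n).length = f n :=
  length_pad (length_longestUpTo_le _ _)

theorem nodup_map_length_freeNodes : ∀ n, ((freeNodes f n).map List.length).Nodup
  | 0 => List.nodup_singleton _
  | n + 1 => nodup_map_length_step (nodup_map_length_freeNodes n)

theorem pow_le_one_sub_sum (hsum : ∀ n, ∑ k ∈ Finset.range n, (2⁻¹ : ℝ) ^ f k ≤ 1) (n : ℕ) :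
    (2⁻¹ : ℝ) ^ f n ≤ 1 - ∑ k ∈ Finset.range n, (2⁻¹ : ℝ) ^ f k := by
  have := hsum (n + 1)
  rw [Finset.sum_range_succ] at this
  linarith

theorem kraftSum_freeNodes (hsum : ∀ n, ∑ k ∈ Finset.range n, (2⁻¹ : ℝ) ^ f k ≤ 1) (n : ℕ) :
    kraftSum (freeNodes f n) = 1 - ∑ k ∈ Finset.range n, (2⁻¹ : ℝ) ^ f k := by
  induction n with
  | zero => simp [freeNodes, kraftSum]
  | succ n ih =>
    have hnd := nodup_map_length_freeNodes (f := f) n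
    have hx := longestUpTo_mem_of_pow_le_kraftSum hnd (ih ▸ pow_le_one_sub_sum hsum n)
    rw [freeNodes, kraftSum_step hnd.of_map hx, ih, Finset.sum_range_succ]
    ring

theorem longestUpTo_mem_freeNodes (hsum : ∀ n, ∑ k ∈ Finset.range n, (2⁻¹ : ℝ) ^ f k ≤ 1)
    (n : ℕ) : longestUpTo (f n) (freeNodes f n) ∈ freeNodes f n :=
  longestUpTo_mem_of_pow_le_kraftSum (nodup_map_length_freeNodes n)
    (kraftSum_freeNodes hsum n ▸ pow_le_one_sub_sum hsum n)

theorem pairwise_code_append_freeNodes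
    (hsum : ∀ n, ∑ k ∈ Finset.range n, (2⁻¹ : ℝ) ^ f k ≤ 1) (n : ℕ) :
    ((List.range n).map (code f) ++ freeNodes f n).Pairwise (IncompRel List.IsPrefix) := by
  induction n with
  | zero => simp [freeNodes]
  | succ n ih =>
    rw [List.range_succ, List.map_append, List.map_singleton, freeNodes]
    exact pairwise_step ih (longestUpTo_mem_freeNodes hsum n)

theorem pairwise_incompRel_code (hsum : ∀ n, ∑ k ∈ Finset.range n, (2⁻¹ : ℝ) ^ f k ≤ 1) :
    Pairwise fun k m => IncompRel List.IsPrefix (code f k) (code f m) := by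
  intro k m hkm
  have h := List.pairwise_map.1 ((pairwise_code_append_freeNodes hsum (max k m + 1)).sublist
    (List.sublist_append_left _ _))
  exact h.forall (List.mem_range.2 (by omega)) (List.mem_range.2 (by omega)) hkm

end Code

section Computability

open Primrec

theorem primrec_longestUpTo {α : Type*} [Primcodable α] : Primrec₂ (longestUpTo (α := α)) :=
  (list_foldr snd (const []) (Primrec.ite
    ((nat_le.comp (list_length.comp (fst.comp snd)) (fst.comp fst)).and
      (nat_lt.comp (list_length.comp (snd.comp snd)) (list_length.comp (fst.comp snd))))
    (fst.comp snd) (snd.comp snd)).to₂).to₂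

theorem primrec_replicate {α : Type*} [Primcodable α] :
    Primrec₂ (List.replicate : ℕ → α → List α) :=
  (list_map (list_range.comp fst) (snd.comp fst).to₂).of_eq fun p => by simp

theorem primrec_pad : Primrec₂ pad :=
  (list_append.comp snd
    (primrec_replicate.comp (nat_sub.comp fst (list_length.comp snd)) (const false))).to₂

theorem primrec_splitOff : Primrec₂ splitOff :=
  (list_map (list_range.comp (nat_sub.comp fst (list_length.comp snd)))
    (list_append.comp (snd.comp fst)
      (list_append.comp (primrec_replicate.comp snd (const false)) (const [true]))).to₂).to₂

theorem primrec_step : Primrec₂ step :=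
  have hx : Primrec fun p : ℕ × List (List Bool) => longestUpTo p.1 p.2 :=
    primrec_longestUpTo.comp fst snd
  (list_append.comp ((PrimrecRel.listFilter Primrec.eq.not).comp snd hx)
    (primrec_splitOff.comp fst hx)).to₂

theorem computable_freeNodes {f : ℕ → ℕ} (hf : Computable f) : Computable (freeNodes f) :=
  (Computable.nat_rec Computable.id (Computable.const [[]])
    (primrec_step.to_comp.comp (hf.comp (Computable.fst.comp Computable.snd))
      (Computable.snd.comp Computable.snd)).to₂).of_eq fun n => by
    induction n with
    | zero => rfl
    | succ n ih => exact congrArg (step (f n)) ih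

theorem computable_code {f : ℕ → ℕ} (hf : Computable f) : Computable (code f) :=
  primrec_pad.to_comp.comp hf (primrec_longestUpTo.to_comp.comp hf (computable_freeNodes hf))

end Computability

end KraftChaitin

open KraftChaitin

theorem kraft_chaitin (f : ℕ → ℕ) (hf : Computable f)
    (hsum : ∀ s : Finset ℕ, ∑ n ∈ s, (2 : ℝ) ^ (-(f n : ℤ)) ≤ 1) :
    ∃ g : ℕ → List Bool, Computable g ∧ Function.Injective g ∧
      PrefixFreeSet (Set.range g) ∧ ∀ n : ℕ, (g n).length = f n := by
  have hcode := pairwise_incompRel_code fun n => by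
    simpa only [zpow_neg, zpow_natCast, inv_pow] using hsum (Finset.range n)
  refine ⟨code f, computable_code hf,
    Function.injective_iff_pairwise_ne.2 (hcode.mono fun _ _ => IncompRel.ne), ?_, length_code⟩
  rintro _ ⟨k, rfl⟩ _ ⟨m, rfl⟩ hkm
  by_contra hne
  exact (hcode fun h => hne (congrArg (code f) h)).1 hkm
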